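/- Let P be a set (of 'primitive functions') and for each F ∈ P let a(F) : ℕ → ℂ be a sequence indexed by primes p ≤ x. Suppose that for each primitive F, ∑_{p ≤ x} |a(F)(p)|²/p = log log x + O(1) as x → ∞, and for distinct primitives F ≠ F', ∑_{p ≤ x} a(F)(p) · conj(a(F')(p))/p = O(1). If F₁,…,F_r and G₁,…,G_t are primitive with multisets {F₁,…,F_r} ≠ {G₁,…,G_t} as multisets, then there exists a prime p with a(F₁)(p) + ⋯ + a(F_r)(p) ≠ a(G₁)(p) + ⋯ + a(G_t)(p). In particular, under these orthogonality hypotheses, factorizations into primitives are determined by the coefficient sums at primes. -/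

import Mathlib

open Finset

private lemma count_ofFn_eq {α : Type*} [DecidableEq α] {k : ℕ} (K : Fin k → α) (H : α) :
    Multiset.count H (Multiset.ofList (List.ofFn K))
      = (Finset.univ.filter fun i => K i = H).card := by
  rw [List.ofFn_eq_map]
  rw [show Multiset.ofList (List.map K (List.finRange k)) = Multiset.map K (Finset.univ.val) by
    simp [Finset.univ, Fintype.elems, List.finRange]]
  rw [Multiset.count_map]
  rw [show (Finset.univ.filter fun i => K i = H).card
      = Multiset.card (Multiset.filter (fun i => K i = H) Finset.univ.val) from rfl]
  congr 1
  simp [eq_comm]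

private lemma key_bound {α : Type*} [DecidableEq α] (a : α → ℕ → ℂ)
    (horth : ∀ F F' : α, F ≠ F' → ∃ C : ℝ, ∀ x : ℕ, 3 ≤ x →
      ‖∑ p ∈ (Finset.range (x + 1)).filter Nat.Prime,
        a F p * (starRingEnd ℂ) (a F' p) / (p : ℂ)‖ ≤ C)
    (H : α) {r : ℕ} (F : Fin r → α) :
    ∃ C : ℝ, ∀ x : ℕ, 3 ≤ x →
      ‖(∑ p ∈ (Finset.range (x + 1)).filter Nat.Prime,
          (∑ i, a (F i) p) * (starRingEnd ℂ) (a H p) / (p : ℂ)) -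
        (((Finset.univ.filter fun i => F i = H).card : ℂ) *
          ((∑ p ∈ (Finset.range (x + 1)).filter Nat.Prime, ‖a H p‖ ^ 2 / (p : ℝ) : ℝ) : ℂ))‖
        ≤ C := by
  classical
  set c : Fin r → ℝ := fun i => if h : F i = H then 0 else (horth (F i) H h).choose with hc
  refine ⟨∑ i ∈ Finset.univ.filter (fun i => ¬ F i = H), c i, fun x hx => ?_⟩
  set Px := (Finset.range (x + 1)).filter Nat.Prime with hPx
  have swap : (∑ p ∈ Px, (∑ i, a (F i) p) * (starRingEnd ℂ) (a H p) / (p : ℂ))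
      = ∑ i, ∑ p ∈ Px, a (F i) p * (starRingEnd ℂ) (a H p) / (p : ℂ) := by
    simp_rw [Finset.sum_mul, Finset.sum_div]
    exact Finset.sum_comm
  have hsplit := Finset.sum_filter_add_sum_filter_not Finset.univ (fun i => F i = H)
      (fun i => ∑ p ∈ Px, a (F i) p * (starRingEnd ℂ) (a H p) / (p : ℂ))
  have hdiagpart : (∑ i ∈ Finset.univ.filter (fun i => F i = H),
      ∑ p ∈ Px, a (F i) p * (starRingEnd ℂ) (a H p) / (p : ℂ))
      = ((Finset.univ.filter fun i => F i = H).card : ℂ) *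
          ((∑ p ∈ Px, ‖a H p‖ ^ 2 / (p : ℝ) : ℝ) : ℂ) := by
    rw [Finset.sum_congr rfl (fun i hi => ?_), Finset.sum_const, nsmul_eq_mul]
    rw [Finset.mem_filter] at hi
    rw [hi.2]
    push_cast
    refine Finset.sum_congr rfl fun p hp => ?_
    rw [Complex.mul_conj]
    norm_cast
    rw [Complex.normSq_eq_norm_sq]
  rw [swap, ← hsplit, hdiagpart, add_sub_cancel_left]
  calc ‖∑ i ∈ Finset.univ.filter (fun i => ¬ F i = H),
        ∑ p ∈ Px, a (F i) p * (starRingEnd ℂ) (a H p) / (p : ℂ)‖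
      ≤ ∑ i ∈ Finset.univ.filter (fun i => ¬ F i = H),
        ‖∑ p ∈ Px, a (F i) p * (starRingEnd ℂ) (a H p) / (p : ℂ)‖ :=
        norm_sum_le _ _
    _ ≤ ∑ i ∈ Finset.univ.filter (fun i => ¬ F i = H), c i := by
        refine Finset.sum_le_sum fun i hi => ?_
        rw [Finset.mem_filter] at hi
        have h := hi.2
        rw [hc]
        simp only [dif_neg h]
        exact (horth (F i) H h).choose_spec x hx

open Finset in
/-- Under Selberg's orthonormality hypotheses (Conjecture B) for a family of
"primitive" coefficient sequences, two distinct multisets of primitives have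
coefficient sums that differ at some prime. -/
theorem distinct_multisets_of_primitives_differ
    {α : Type*} (a : α → ℕ → ℂ)
    (hdiag : ∀ F : α, ∃ C : ℝ, ∀ x : ℕ, 3 ≤ x →
      |(∑ p ∈ (Finset.range (x + 1)).filter Nat.Prime, ‖a F p‖ ^ 2 / (p : ℝ)) -
        Real.log (Real.log x)| ≤ C)
    (horth : ∀ F F' : α, F ≠ F' → ∃ C : ℝ, ∀ x : ℕ, 3 ≤ x →
      ‖∑ p ∈ (Finset.range (x + 1)).filter Nat.Prime,
        a F p * (starRingEnd ℂ) (a F' p) / (p : ℂ)‖ ≤ C)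
    {r t : ℕ} (F : Fin r → α) (G : Fin t → α)
    (hne : (Multiset.ofList (List.ofFn F)) ≠ Multiset.ofList (List.ofFn G)) :
    ∃ p : ℕ, p.Prime ∧ (∑ i, a (F i) p) ≠ (∑ j, a (G j) p) := by
  classical
  by_contra hcon
  push_neg at hcon
  obtain ⟨H, hH⟩ : ∃ H, Multiset.count H (Multiset.ofList (List.ofFn F)) ≠
      Multiset.count H (Multiset.ofList (List.ofFn G)) := by
    by_contra h
    push_neg at h
    exact hne (Multiset.ext.mpr h)
  rw [count_ofFn_eq F H, count_ofFn_eq G H] at hH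
  set m := (Finset.univ.filter fun i => F i = H).card with hm
  set n := (Finset.univ.filter fun j => G j = H).card with hn
  obtain ⟨CF, hCF⟩ := key_bound a horth H F
  obtain ⟨CG, hCG⟩ := key_bound a horth H G
  obtain ⟨Cd, hCd⟩ := hdiag H
  have htend : Filter.Tendsto (fun x : ℕ => Real.log (Real.log x)) Filter.atTop Filter.atTop :=
    Real.tendsto_log_atTop.comp (Real.tendsto_log_atTop.comp tendsto_natCast_atTop_atTop)
  obtain ⟨x, hxbig, hx3⟩ := ((htend.eventually_gt_atTop (CF + CG + Cd)).and
      (Filter.eventually_ge_atTop 3)).exists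
  set Px := (Finset.range (x + 1)).filter Nat.Prime with hPx
  set D : ℝ := ∑ p ∈ Px, ‖a H p‖ ^ 2 / (p : ℝ) with hD
  have hsumeq : (∑ p ∈ Px, (∑ i, a (F i) p) * (starRingEnd ℂ) (a H p) / (p : ℂ))
      = ∑ p ∈ Px, (∑ j, a (G j) p) * (starRingEnd ℂ) (a H p) / (p : ℂ) :=
    Finset.sum_congr rfl fun p hp => by
      rw [hcon p (Finset.mem_filter.mp hp).2]
  have h1 := hCF x hx3
  have h2 := hCG x hx3
  have hkey : ‖((m : ℂ) - n) * (D : ℂ)‖ ≤ CF + CG := by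
    have heq : ((m : ℂ) - n) * (D : ℂ)
        = ((∑ p ∈ Px, (∑ j, a (G j) p) * (starRingEnd ℂ) (a H p) / (p : ℂ)) - (n : ℂ) * D)
          - ((∑ p ∈ Px, (∑ i, a (F i) p) * (starRingEnd ℂ) (a H p) / (p : ℂ)) - (m : ℂ) * D) := by
      rw [hsumeq]; ring
    rw [heq]
    calc ‖_ - _‖ ≤ ‖(∑ p ∈ Px, (∑ j, a (G j) p) * (starRingEnd ℂ) (a H p) / (p : ℂ)) - (n : ℂ) * D‖
        + ‖(∑ p ∈ Px, (∑ i, a (F i) p) * (starRingEnd ℂ) (a H p) / (p : ℂ)) - (m : ℂ) * D‖ :=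
        norm_sub_le _ _
      _ ≤ CF + CG := by rw [add_comm CF CG]; exact add_le_add h2 h1
  have hone : (1 : ℝ) ≤ ‖((m : ℂ) - n)‖ := by
    have h0 : ((m : ℤ) - n) ≠ 0 := sub_ne_zero.mpr (by exact_mod_cast hH)
    have h1 := Int.one_le_abs h0
    calc (1 : ℝ) ≤ |(((m : ℤ) - n : ℤ) : ℝ)| := by exact_mod_cast h1
      _ = ‖((((m : ℤ) - n : ℤ)) : ℂ)‖ := (Complex.norm_intCast _).symm
      _ = ‖((m : ℂ) - n)‖ := by push_cast; ring_nf
  have hDle : |D| ≤ CF + CG := by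
    have : ‖((m : ℂ) - n) * (D : ℂ)‖ = ‖((m : ℂ) - n)‖ * ‖(D : ℂ)‖ := norm_mul _ _
    have hD' : ‖(D : ℂ)‖ = |D| := by rw [Complex.norm_real, Real.norm_eq_abs]
    nlinarith [abs_nonneg D, hkey, norm_nonneg ((m : ℂ) - n)]
  have hd := hCd x hx3
  rw [abs_sub_le_iff] at hd
  have := le_abs_self D
  have := neg_abs_le D
  linarith [hd.1, hd.2]
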